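/- arXiv:2510.23912 — 4 statements merged into one kernel-verified Lean document; each statement's English description precedes it below -/
import Mathlib

section
/- Consider an L-layer decoder-only transformer without normalization whose layer i (1 ≤ i ≤ L) maps X ↦ φ((X + S_c(X, W_Q^i, W_K^i, W_V^i)·W_O^i)·W_up^i)·W_down^i, with input X_0 ∈ ℝ^{n×d} whose row t equals E(x_t) plus row t of E_P for a token sequence x ∈ (Fin V)^n, and output X_L·W_LM. If every W_Q^i is invertible, then there exist a modified embedding Ẽ : Fin V → ℝ^d, modified positional embeddings Ẽ_P ∈ ℝ^{n×d}, a modified LM head W̃_LM ∈ ℝ^{d×V}, and modified per-layer weights (W̃_K^i, W̃_V^i, W̃_O^i, W̃_up^i, W̃_down^i) for 1 ≤ i ≤ L, such that the transformer built from these modified weights with every query weight equal to the identity matrix I_d produces the same output matrix X_L·W_LM as the original transformer on every token sequence x ∈ (Fin V)^n. In particular one may take Θ_i = W_Q^i for 1 ≤ i ≤ L, Θ_{L+1} = I_d, Ẽ = E·Θ_1, Ẽ_P = E_P·Θ_1, W̃_K^i = Θ_i⁻¹W_K^i, W̃_V^i = Θ_i⁻¹W_V^i, W̃_O^i = W_O^i·Θ_i,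 W̃_up^i = Θ_i⁻¹W_up^i, W̃_down^i = W_down^i·Θ_{i+1}, W̃_LM = W_LM. -/
open scoped Matrix

/-- Causal softmax: `CS(A)_{pq} = exp(A_{pq}) / Σ_{r ≤ p} exp(A_{pr})` if `q ≤ p`, else `0`. -/
noncomputable def causalSoftmax {n : ℕ} (A : Matrix (Fin n) (Fin n) ℝ) :
    Matrix (Fin n) (Fin n) ℝ :=
  Matrix.of fun p q =>
    if q ≤ p then
      Real.exp (A p q) / ∑ r ∈ Finset.univ.filter (fun r => r ≤ p), Real.exp (A p r)
    else 0

/-- The `i`-th block of `d_k` consecutive columns (columns are indexed by `Fin h × Fin d_k`). -/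
def blockCol {n h dk : ℕ} (i : Fin h) (M : Matrix (Fin n) (Fin h × Fin dk) ℝ) :
    Matrix (Fin n) (Fin dk) ℝ :=
  Matrix.of fun p j => M p (i, j)

/-- Multi-head causal self-attention: per head `i`,
`CS((1/√d_k)(XW_Q)_i (XW_K)_iᵀ) (XW_V)_i`, concatenated over heads. -/
noncomputable def Sc {n h dk : ℕ} (X : Matrix (Fin n) (Fin h × Fin dk) ℝ)
    (WQ WK WV : Matrix (Fin h × Fin dk) (Fin h × Fin dk) ℝ) :
    Matrix (Fin n) (Fin h × Fin dk) ℝ :=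
  Matrix.of fun p c =>
    (causalSoftmax ((1 / Real.sqrt dk) •
        (blockCol c.1 (X * WQ) * (blockCol c.1 (X * WK))ᵀ)) *
      blockCol c.1 (X * WV)) p c.2


/-- One transformer layer without normalization, with a skip connection only around the
attention: `X ↦ φ((X + S_c(X, W_Q, W_K, W_V) · W_O) · W_up) · W_down`. -/
noncomputable def layerA {n h dk m : ℕ} (φ : ℝ → ℝ)
    (WQ WK WV WO : Matrix (Fin h × Fin dk) (Fin h × Fin dk) ℝ)
    (Wup : Matrix (Fin h × Fin dk) (Fin m) ℝ)
    (Wdown : Matrix (Fin m) (Fin h × Fin dk) ℝ)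
    (X : Matrix (Fin n) (Fin h × Fin dk) ℝ) : Matrix (Fin n) (Fin h × Fin dk) ℝ :=
  (((X + Sc X WQ WK WV * WO) * Wup).map φ) * Wdown

/-- The `L`-layer forward pass (layer `0` applied first). -/
noncomputable def forwardA {n h dk m L : ℕ} (φ : ℝ → ℝ)
    (WQ WK WV WO : Fin L → Matrix (Fin h × Fin dk) (Fin h × Fin dk) ℝ)
    (Wup : Fin L → Matrix (Fin h × Fin dk) (Fin m) ℝ)
    (Wdown : Fin L → Matrix (Fin m) (Fin h × Fin dk) ℝ)
    (X0 : Matrix (Fin n) (Fin h × Fin dk) ℝ) : Matrix (Fin n) (Fin h × Fin dk) ℝ :=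
  (List.finRange L).foldl
    (fun X i => layerA φ (WQ i) (WK i) (WV i) (WO i) (Wup i) (Wdown i) X) X0

/-!
Any invertible `Θ` can be pushed through a layer: if the residual stream `X` is replaced by
`X Θ`, the weights reading from the stream (`W_Q`, `W_K`, `W_V`, `W_up`) absorb `Θ⁻¹` on the
left, `W_O` absorbs `Θ` on the right, and the skip connection carries `X Θ` along unchanged.
Taking `Θ_i = W_Q^i` in front of layer `i` makes every query weight the identity; the
`Θ_{i+1}` that layer `i` must produce is absorbed into `W_down^i`, and `Θ_{L+1} = I` leaves the
output untouched.
-/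

theorem foldl_finRange_intertwine {α β : Type*} :
    ∀ {L : ℕ} (f : Fin L → α → α) (g : Fin L → β → β) (T : Fin (L + 1) → β → α),
      (∀ i b, f i (T i.castSucc b) = T i.succ (g i b)) → ∀ b,
      (List.finRange L).foldl (fun a i => f i a) (T 0 b) =
        T (Fin.last L) ((List.finRange L).foldl (fun b i => g i b) b)
  | 0, _, _, _, _, _ => rfl
  | L + 1, f, g, T, h, b => by
    simp only [List.finRange_succ, List.foldl_cons, List.foldl_map]
    rw [show (0 : Fin (L + 2)) = Fin.castSucc 0 from rfl, h, ← Fin.succ_last]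
    exact foldl_finRange_intertwine (fun i => f i.succ) (fun i => g i.succ) (fun i => T i.succ)
      (fun i b => by simpa only [Fin.succ_castSucc] using h i.succ b) (g 0 b)

section Reparametrization

variable {n h dk m : ℕ}

theorem Sc_mul_right (X : Matrix (Fin n) (Fin h × Fin dk) ℝ)
    (P WQ WK WV : Matrix (Fin h × Fin dk) (Fin h × Fin dk) ℝ) :
    Sc (X * P) WQ WK WV = Sc X (P * WQ) (P * WK) (P * WV) := by
  simp only [Sc, Matrix.mul_assoc]

theorem layerA_mul_down (φ : ℝ → ℝ) (WQ WK WV WO Θ : Matrix (Fin h × Fin dk) (Fin h × Fin dk) ℝ)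
    (Wup : Matrix (Fin h × Fin dk) (Fin m) ℝ) (Wdown : Matrix (Fin m) (Fin h × Fin dk) ℝ)
    (X : Matrix (Fin n) (Fin h × Fin dk) ℝ) :
    layerA φ WQ WK WV WO Wup (Wdown * Θ) X = layerA φ WQ WK WV WO Wup Wdown X * Θ := by
  simp only [layerA, Matrix.mul_assoc]

theorem layerA_mul_right (φ : ℝ → ℝ) (P WQ WK WV WO : Matrix (Fin h × Fin dk) (Fin h × Fin dk) ℝ)
    (Wup : Matrix (Fin h × Fin dk) (Fin m) ℝ) (Wdown : Matrix (Fin m) (Fin h × Fin dk) ℝ)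
    (hP : IsUnit P.det) (X : Matrix (Fin n) (Fin h × Fin dk) ℝ) :
    layerA φ (P⁻¹ * WQ) (P⁻¹ * WK) (P⁻¹ * WV) (WO * P) (P⁻¹ * Wup) Wdown (X * P) =
      layerA φ WQ WK WV WO Wup Wdown X := by
  have hstream : X * P + Sc (X * P) (P⁻¹ * WQ) (P⁻¹ * WK) (P⁻¹ * WV) * (WO * P) =
      (X + Sc X WQ WK WV * WO) * P := by
    simp only [Sc_mul_right, Matrix.mul_nonsing_inv_cancel_left _ _ hP, Matrix.add_mul,
      Matrix.mul_assoc]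
  rw [layerA, hstream, Matrix.mul_assoc, Matrix.mul_nonsing_inv_cancel_left _ _ hP, layerA]

end Reparametrization

theorem embedding_mul {n V : ℕ} {ι κ : Type*} [Fintype ι] (E : Fin V → ι → ℝ)
    (EP : Matrix (Fin n) ι ℝ) (Θ : Matrix ι κ ℝ) (x : Fin n → Fin V) :
    (Matrix.of fun t c => E (x t) c + EP t c) * Θ =
      Matrix.of fun t c => (E (x t) ᵥ* Θ) c + (EP * Θ) t c := by
  ext t c
  simp [Matrix.mul_apply, Matrix.vecMul, dotProduct, add_mul, Finset.sum_add_distrib]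

/-- **Attention-Skip-Only Query Weight Elimination.** If every `W_Q^i` is invertible,
there exist modified embeddings, positional embeddings, LM head and per-layer weights such
that the transformer with every query weight equal to the identity produces the same output
`X_L · W_LM` on every token sequence. -/
theorem attention_skip_only_query_elimination {n h dk m V L : ℕ} (φ : ℝ → ℝ)
    (E : Fin V → Fin h × Fin dk → ℝ)
    (EP : Matrix (Fin n) (Fin h × Fin dk) ℝ)
    (WLM : Matrix (Fin h × Fin dk) (Fin V) ℝ)
    (WQ WK WV WO : Fin L → Matrix (Fin h × Fin dk) (Fin h × Fin dk) ℝ)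
    (Wup : Fin L → Matrix (Fin h × Fin dk) (Fin m) ℝ)
    (Wdown : Fin L → Matrix (Fin m) (Fin h × Fin dk) ℝ)
    (hWQ : ∀ i, IsUnit (WQ i).det) :
    ∃ (Etil : Fin V → Fin h × Fin dk → ℝ)
      (EPtil : Matrix (Fin n) (Fin h × Fin dk) ℝ)
      (WLMtil : Matrix (Fin h × Fin dk) (Fin V) ℝ)
      (WKtil WVtil WOtil : Fin L → Matrix (Fin h × Fin dk) (Fin h × Fin dk) ℝ)
      (Wuptil : Fin L → Matrix (Fin h × Fin dk) (Fin m) ℝ)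
      (Wdowntil : Fin L → Matrix (Fin m) (Fin h × Fin dk) ℝ),
      ∀ x : Fin n → Fin V,
        forwardA φ (fun _ => (1 : Matrix (Fin h × Fin dk) (Fin h × Fin dk) ℝ))
            WKtil WVtil WOtil Wuptil Wdowntil
            (Matrix.of fun t c => Etil (x t) c + EPtil t c) * WLMtil =
          forwardA φ WQ WK WV WO Wup Wdown
            (Matrix.of fun t c => E (x t) c + EP t c) * WLM := by
  set Θ : Fin (L + 1) → Matrix (Fin h × Fin dk) (Fin h × Fin dk) ℝ := Fin.snoc WQ 1
  refine ⟨fun v => E v ᵥ* Θ 0, EP * Θ 0, WLM, fun i => (WQ i)⁻¹ * WK i,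
    fun i => (WQ i)⁻¹ * WV i, fun i => WO i * WQ i, fun i => (WQ i)⁻¹ * Wup i,
    fun i => Wdown i * Θ i.succ, fun x => ?_⟩
  have hlayer : ∀ (i : Fin L) (X : Matrix (Fin n) (Fin h × Fin dk) ℝ),
      layerA φ 1 ((WQ i)⁻¹ * WK i) ((WQ i)⁻¹ * WV i) (WO i * WQ i) ((WQ i)⁻¹ * Wup i)
          (Wdown i * Θ i.succ) (X * Θ i.castSucc) =
        layerA φ (WQ i) (WK i) (WV i) (WO i) (Wup i) (Wdown i) X * Θ i.succ := by
    intro i X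
    rw [show Θ i.castSucc = WQ i from Fin.snoc_castSucc .., layerA_mul_down,
      ← Matrix.nonsing_inv_mul _ (hWQ i), layerA_mul_right φ _ _ _ _ _ _ _ (hWQ i)]
  rw [← embedding_mul, forwardA, forwardA,
    foldl_finRange_intertwine _ _ (fun j X => X * Θ j) hlayer,
    show Θ (Fin.last L) = 1 from Fin.snoc_last .., Matrix.mul_one]
end

section
/- The image of L_ε equals the open ball of the zero-mean hyperplane: Im(L_ε) = {z ∈ ℝ^d : Σ_{i=1}^d z_i = 0 and ‖z‖ < √d}, where ‖·‖ is the Euclidean norm. Moreover, for every z in this set, the vector c = sqrt(dε/(d − ‖z‖²))·z satisfies L_ε(c) = z, and c is the unique preimage of z with μ(c) = 0. -/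
/-- Mean of a vector: `μ(x) = (1/d) Σ_i x_i`. -/
noncomputable def mu {d : ℕ} (x : Fin d → ℝ) : ℝ := (∑ i, x i) / d

/-- Regularized standard deviation: `σ_ε(x) = sqrt((1/d) Σ_i (x_i − μ(x))² + ε)`. -/
noncomputable def sigmaEps {d : ℕ} (ε : ℝ) (x : Fin d → ℝ) : ℝ :=
  Real.sqrt ((∑ i, (x i - mu x) ^ 2) / d + ε)

/-- Regularized LayerNorm: `L_ε(x) = (x − μ(x)·1)/σ_ε(x)`. -/
noncomputable def Leps {d : ℕ} (ε : ℝ) (x : Fin d → ℝ) : Fin d → ℝ :=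
  fun i => (x i - mu x) / sigmaEps ε x

/-- Euclidean norm of a vector in `ℝ^d`. -/
noncomputable def vnorm {d : ℕ} (x : Fin d → ℝ) : ℝ := Real.sqrt (∑ i, x i ^ 2)

/-!
For a zero-mean `c`, `L_ε(c) = c / σ_ε(c)` and `σ_ε(c)² = ‖c‖²/d + ε`. Writing `c = s • z` with
`z = L_ε(c)`, the scale `s = σ_ε(c)` must therefore solve `s² = s²‖z‖²/d + ε`, whose only
nonnegative solution is `s = √(dε/(d − ‖z‖²))`; conversely this `s` reproduces `z`. Every output of
`L_ε` has zero sum and `‖L_ε(x)‖² = S/(S/d + ε) < d` with `S = Σ (x_i − μ(x))²`.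
-/

open Finset Real

variable {d : ℕ}

lemma vnorm_sq (x : Fin d → ℝ) : vnorm x ^ 2 = ∑ i, x i ^ 2 :=
  sq_sqrt (sum_nonneg fun _ _ => sq_nonneg _)

lemma vnorm_lt_sqrt_iff (x : Fin d → ℝ) (r : ℝ) : vnorm x < √r ↔ vnorm x ^ 2 < r := by
  rw [vnorm_sq]
  exact sqrt_lt_sqrt_iff (sum_nonneg fun _ _ => sq_nonneg _)

lemma mu_smul (s : ℝ) (x : Fin d → ℝ) : mu (s • x) = s * mu x := by
  simp only [mu, Pi.smul_apply, smul_eq_mul, ← mul_sum, mul_div_assoc]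

lemma mu_eq_zero_of_sum_eq_zero {x : Fin d → ℝ} (hx : ∑ i, x i = 0) : mu x = 0 := by
  rw [mu, hx, zero_div]

lemma sum_sub_mu (x : Fin d → ℝ) : ∑ i, (x i - mu x) = 0 := by
  rcases Nat.eq_zero_or_pos d with rfl | hd
  · simp
  · simp only [sum_sub_distrib, sum_const, card_univ, Fintype.card_fin, nsmul_eq_mul, mu]
    field_simp
    ring

lemma sum_Leps (ε : ℝ) (x : Fin d → ℝ) : ∑ i, Leps ε x i = 0 := by
  simp only [Leps, ← sum_div, sum_sub_mu, zero_div]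

lemma sigmaEps_sq {ε : ℝ} (hε : 0 ≤ ε) (x : Fin d → ℝ) :
    sigmaEps ε x ^ 2 = (∑ i, (x i - mu x) ^ 2) / d + ε :=
  sq_sqrt (by positivity)

lemma sigmaEps_pos {ε : ℝ} (hε : 0 < ε) (x : Fin d → ℝ) : 0 < sigmaEps ε x :=
  sqrt_pos.mpr (by positivity)

lemma vnorm_Leps_sq (ε : ℝ) (x : Fin d → ℝ) :
    vnorm (Leps ε x) ^ 2 = (∑ i, (x i - mu x) ^ 2) / sigmaEps ε x ^ 2 := by
  simp only [vnorm_sq, Leps, div_pow, ← sum_div]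

lemma vnorm_Leps_sq_lt (hd : 0 < d) {ε : ℝ} (hε : 0 < ε) (x : Fin d → ℝ) :
    vnorm (Leps ε x) ^ 2 < d := by
  set S := ∑ i, (x i - mu x) ^ 2
  have hS : 0 ≤ S := sum_nonneg fun _ _ => sq_nonneg _
  have hdR : (0 : ℝ) < d := Nat.cast_pos.mpr hd
  rw [vnorm_Leps_sq, div_lt_iff₀ (pow_pos (sigmaEps_pos hε x) 2),
    sigmaEps_sq hε.le, mul_add, mul_div_cancel₀ S hdR.ne']
  nlinarith [mul_pos hdR hε]

lemma Leps_of_mu_eq_zero (ε : ℝ) {x : Fin d → ℝ} (hx : mu x = 0) :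
    Leps ε x = (sigmaEps ε x)⁻¹ • x := by
  funext i
  simp only [Leps, hx, sub_zero, Pi.smul_apply, smul_eq_mul, div_eq_inv_mul]

lemma sigmaEps_smul_of_mu_eq_zero (ε s : ℝ) {z : Fin d → ℝ} (hz : mu z = 0) :
    sigmaEps ε (s • z) = √(s ^ 2 * vnorm z ^ 2 / d + ε) := by
  simp only [sigmaEps, mu_smul, hz, mul_zero, sub_zero, Pi.smul_apply, smul_eq_mul, mul_pow,
    ← mul_sum, vnorm_sq]

lemma sq_eq_sq_mul_div_add_iff {a b ε s : ℝ} (ha : 0 < a) (hb : b < a) (hε : 0 ≤ ε)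
    (hs : 0 ≤ s) : s ^ 2 = s ^ 2 * b / a + ε ↔ s = √(a * ε / (a - b)) := by
  have hab : 0 < a - b := sub_pos.mpr hb
  rw [eq_comm (a := s), sqrt_eq_iff_eq_sq (by positivity) hs, div_eq_iff hab.ne',
    ← sub_eq_iff_eq_add, eq_comm]
  constructor <;> intro h <;> field_simp at h ⊢ <;> linarith

lemma sigmaEps_smul_eq_self_iff (hd : 0 < d) {ε : ℝ} (hε : 0 ≤ ε) {z : Fin d → ℝ}
    (hz : mu z = 0) (hzn : vnorm z ^ 2 < d) {s : ℝ} (hs : 0 ≤ s) :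
    sigmaEps ε (s • z) = s ↔ s = √(d * ε / (d - vnorm z ^ 2)) := by
  rw [← sq_eq_sq_mul_div_add_iff (Nat.cast_pos.mpr hd) hzn hε hs,
    sigmaEps_smul_of_mu_eq_zero ε s hz, sqrt_eq_iff_eq_sq (by positivity) hs, mul_div_assoc,
    eq_comm]

lemma Leps_sqrt_smul (hd : 0 < d) {ε : ℝ} (hε : 0 < ε) {z : Fin d → ℝ} (hz : ∑ i, z i = 0)
    (hzn : vnorm z ^ 2 < d) : Leps ε (√(d * ε / (d - vnorm z ^ 2)) • z) = z := by
  set t := √(d * ε / (d - vnorm z ^ 2))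
  have hmu : mu z = 0 := mu_eq_zero_of_sum_eq_zero hz
  have ht : 0 < t := sqrt_pos.mpr (div_pos (by positivity) (sub_pos.mpr hzn))
  have hσ : sigmaEps ε (t • z) = t := (sigmaEps_smul_eq_self_iff hd hε.le hmu hzn ht.le).mpr rfl
  rw [Leps_of_mu_eq_zero ε (by rw [mu_smul, hmu, mul_zero]), hσ, smul_smul,
    inv_mul_cancel₀ ht.ne', one_smul]

lemma eq_sqrt_smul_of_Leps_eq (hd : 0 < d) {ε : ℝ} (hε : 0 < ε) {c z : Fin d → ℝ}
    (hcz : Leps ε c = z) (hc : mu c = 0) (hzn : vnorm z ^ 2 < d) :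
    c = √(d * ε / (d - vnorm z ^ 2)) • z := by
  set σ := sigmaEps ε c
  have hσ : 0 < σ := sigmaEps_pos hε c
  have hc_eq : c = σ • z := by
    rw [← hcz, Leps_of_mu_eq_zero ε hc, smul_smul, mul_inv_cancel₀ hσ.ne', one_smul]
  have hz : mu z = 0 := by rw [← hcz, Leps_of_mu_eq_zero ε hc, mu_smul, hc, mul_zero]
  have hfix : sigmaEps ε (σ • z) = σ := by rw [← hc_eq]
  rwa [← (sigmaEps_smul_eq_self_iff hd hε.le hz hzn hσ.le).mp hfix]

/-- The image of `L_ε` is the open ball of radius `√d` in the zero-mean hyperplane, and each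
`z` in it has the unique zero-mean preimage `c = sqrt(dε/(d − ‖z‖²)) · z`. -/
theorem Leps_range {d : ℕ} (hd : 0 < d) (ε : ℝ) (hε : 0 < ε) :
    Set.range (Leps (d := d) ε) =
        {z : Fin d → ℝ | (∑ i, z i) = 0 ∧ vnorm z < Real.sqrt d} ∧
    ∀ z : Fin d → ℝ, (∑ i, z i) = 0 → vnorm z < Real.sqrt d →
      Leps ε (Real.sqrt (d * ε / (d - vnorm z ^ 2)) • z) = z ∧
      ∀ c' : Fin d → ℝ, Leps ε c' = z → mu c' = 0 →
        c' = Real.sqrt (d * ε / (d - vnorm z ^ 2)) • z := by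
  simp only [vnorm_lt_sqrt_iff]
  refine ⟨Set.ext fun z => ⟨?_, ?_⟩, fun z hz hzn =>
    ⟨Leps_sqrt_smul hd hε hz hzn, fun c hcz hc => eq_sqrt_smul_of_Leps_eq hd hε hcz hc hzn⟩⟩
  · rintro ⟨x, rfl⟩
    exact ⟨sum_Leps ε x, vnorm_Leps_sq_lt hd hε x⟩
  · rintro ⟨hz, hzn⟩
    exact ⟨_, Leps_sqrt_smul hd hε hz hzn⟩
end

section
/- Let h ≥ 1, m ≥ 1, W_1 ∈ ℝ^{m×h}, W_2 ∈ ℝ^{h×m}, and suppose J ⊆ {1,…,m} satisfies W_2·Π·W_1 = −I_h, where Π = diag(1_J) is the diagonal 0/1 projector onto the coordinates in J. Set D = I_m − 2Π (a diagonal ±1 matrix), V_1 = D·W_1, and V_2 = W_2. Then W_2·ReLU(W_1 x) + x = V_2·ReLU(V_1 x) for all x ∈ ℝ^h. -/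
/-!
Flipping the sign of the coordinates in `J` changes `ReLU` by exactly the projection onto `J`,
because `max (-a) 0 = max a 0 - a`. Hence
`W₂ ReLU(D W₁ x) = W₂ ReLU(W₁ x) - W₂ Π W₁ x = W₂ ReLU(W₁ x) + x`.
-/

def reluV {m : ℕ} (y : Fin m → ℝ) : Fin m → ℝ := fun i => max (y i) 0

open Matrix

theorem reluV_signFlip {m : ℕ} (J : Finset (Fin m)) (y : Fin m → ℝ) :
    reluV (((1 : Matrix (Fin m) (Fin m) ℝ) -
        (2 : ℝ) • diagonal (fun i => if i ∈ J then (1 : ℝ) else 0)) *ᵥ y) =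
      reluV y - diagonal (fun i => if i ∈ J then (1 : ℝ) else 0) *ᵥ y := by
  funext i
  simp only [reluV, Pi.sub_apply, sub_mulVec, smul_mulVec, one_mulVec, mulVec_diagonal,
    Pi.smul_apply, smul_eq_mul]
  split_ifs
  · rw [show y i - 2 * (1 * y i) = -y i by ring, max_neg_zero]
    ring
  · simp

theorem skip_absorption_sufficiency_general {h m : ℕ}
    (W1 : Matrix (Fin m) (Fin h) ℝ) (W2 : Matrix (Fin h) (Fin m) ℝ)
    (J : Finset (Fin m))
    (hJ : W2 * Matrix.diagonal (fun i => if i ∈ J then (1 : ℝ) else 0) * W1 =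
        -(1 : Matrix (Fin h) (Fin h) ℝ)) :
    ∀ x : Fin h → ℝ,
      W2.mulVec (reluV (W1.mulVec x)) + x =
        W2.mulVec (reluV
          ((((1 : Matrix (Fin m) (Fin m) ℝ) -
              (2 : ℝ) • Matrix.diagonal (fun i => if i ∈ J then (1 : ℝ) else 0)) * W1).mulVec
            x)) := by
  intro x
  rw [← mulVec_mulVec, reluV_signFlip, mulVec_sub, mulVec_mulVec, mulVec_mulVec, hJ,
    neg_mulVec, one_mulVec, sub_neg_eq_add]

/-- **Sufficiency.** If `W_2 Π W_1 = −I_h` for the projector `Π = diag(1_J)` onto `J`,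
then with `D = I − 2Π`, `V_1 = D W_1` and `V_2 = W_2`,
`W_2·ReLU(W_1 x) + x = V_2·ReLU(V_1 x)` for all `x`. -/
theorem skip_absorption_sufficiency {h m : ℕ} (hh : 1 ≤ h) (hm : 1 ≤ m)
    (W1 : Matrix (Fin m) (Fin h) ℝ) (W2 : Matrix (Fin h) (Fin m) ℝ)
    (J : Finset (Fin m))
    (hJ : W2 * Matrix.diagonal (fun i => if i ∈ J then (1 : ℝ) else 0) * W1 =
        -(1 : Matrix (Fin h) (Fin h) ℝ)) :
    ∀ x : Fin h → ℝ,
      W2.mulVec (reluV (W1.mulVec x)) + x =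
        W2.mulVec (reluV
          ((((1 : Matrix (Fin m) (Fin m) ℝ) -
              (2 : ℝ) • Matrix.diagonal (fun i => if i ∈ J then (1 : ℝ) else 0)) * W1).mulVec
            x)) :=
  skip_absorption_sufficiency_general W1 W2 J hJ
end

section
/- Let h ≥ 1, m ≥ 1, W_1, V_1 ∈ ℝ^{m×h}, and W_2, V_2 ∈ ℝ^{h×m}. If W_2·ReLU(W_1 x) + x = V_2·ReLU(V_1 x) for all x ∈ ℝ^h, then V_2·V_1 = W_2·W_1 + 2I_h, and V_2·|V_1 x| = W_2·|W_1 x| for all x ∈ ℝ^h, where |·| denotes the coordinatewise absolute value on ℝ^m. -/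
/-- Coordinatewise absolute value on `ℝ^m`. -/
def absV {m : ℕ} (y : Fin m → ℝ) : Fin m → ℝ := fun i => |y i|

/-!
Writing `ReLU y = (y + |y|)/2`, the hypothesis becomes
`(V₂V₁ - W₂W₁ - 2I) x = W₂|W₁x| - V₂|V₁x|`. The left side is odd in `x` (it is linear) and the
right side is even, so both vanish.
-/

open Matrix

lemma reluV_eq_half_smul_add_absV {m : ℕ} (y : Fin m → ℝ) :
    reluV y = (2 : ℝ)⁻¹ • (y + absV y) := by
  funext i
  simp only [reluV, absV, Pi.smul_apply, Pi.add_apply, smul_eq_mul]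
  rcases le_total (y i) 0 with hy | hy
  · rw [max_eq_right hy, abs_of_nonpos hy]; ring
  · rw [max_eq_left hy, abs_of_nonneg hy]; ring

lemma absV_neg {m : ℕ} (y : Fin m → ℝ) : absV (-y) = absV y := by
  funext i
  simp [absV]

lemma mulVec_reluV {m n : ℕ} (A : Matrix (Fin n) (Fin m) ℝ) (y : Fin m → ℝ) :
    A *ᵥ reluV y = (2 : ℝ)⁻¹ • (A *ᵥ y + A *ᵥ absV y) := by
  rw [reluV_eq_half_smul_add_absV, mulVec_smul, mulVec_add]

lemma sub_mulVec_eq_sub_mulVec_absV_of_mulVec_reluV_add_eq {h m : ℕ}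
    {W1 V1 : Matrix (Fin m) (Fin h) ℝ} {W2 V2 : Matrix (Fin h) (Fin m) ℝ} {x : Fin h → ℝ}
    (heq : W2 *ᵥ reluV (W1 *ᵥ x) + x = V2 *ᵥ reluV (V1 *ᵥ x)) :
    (V2 * V1 - W2 * W1 - (2 : ℝ) • 1) *ᵥ x =
      W2 *ᵥ absV (W1 *ᵥ x) - V2 *ᵥ absV (V1 *ᵥ x) := by
  rw [mulVec_reluV, mulVec_reluV] at heq
  rw [sub_mulVec, sub_mulVec, ← mulVec_mulVec, ← mulVec_mulVec, smul_mulVec, one_mulVec]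
  linear_combination (norm := module) (-2 : ℝ) • heq

theorem skip_absorption_necessity_general {h m : ℕ}
    (W1 V1 : Matrix (Fin m) (Fin h) ℝ) (W2 V2 : Matrix (Fin h) (Fin m) ℝ)
    (heq : ∀ x : Fin h → ℝ,
        W2.mulVec (reluV (W1.mulVec x)) + x = V2.mulVec (reluV (V1.mulVec x))) :
    V2 * V1 = W2 * W1 + (2 : ℝ) • (1 : Matrix (Fin h) (Fin h) ℝ) ∧
    ∀ x : Fin h → ℝ, V2.mulVec (absV (V1.mulVec x)) = W2.mulVec (absV (W1.mulVec x)) := by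
  have hsplit := fun x => sub_mulVec_eq_sub_mulVec_absV_of_mulVec_reluV_add_eq (heq x)
  set D := V2 * V1 - W2 * W1 - (2 : ℝ) • 1
  have hD : (fun x => D *ᵥ x) = 0 := by
    refine Function.zero_of_even_and_odd (fun x => ?_) fun x => mulVec_neg x D
    simp only [hsplit, mulVec_neg, absV_neg]
  refine ⟨?_, fun x => (sub_eq_zero.1 ((hsplit x).symm.trans (congrFun hD x))).symm⟩
  rw [← sub_eq_iff_eq_add', ← sub_eq_zero]
  exact ext_iff_mulVec.2 fun x => by simpa using congrFun hD x

/-- **Necessity.** If `W_2·ReLU(W_1 x) + x = V_2·ReLU(V_1 x)` for all `x`, then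
`V_2 V_1 = W_2 W_1 + 2 I_h` and `V_2·|V_1 x| = W_2·|W_1 x|` for all `x`. -/
theorem skip_absorption_necessity {h m : ℕ} (hh : 1 ≤ h) (hm : 1 ≤ m)
    (W1 V1 : Matrix (Fin m) (Fin h) ℝ) (W2 V2 : Matrix (Fin h) (Fin m) ℝ)
    (heq : ∀ x : Fin h → ℝ,
        W2.mulVec (reluV (W1.mulVec x)) + x = V2.mulVec (reluV (V1.mulVec x))) :
    V2 * V1 = W2 * W1 + (2 : ℝ) • (1 : Matrix (Fin h) (Fin h) ℝ) ∧
    ∀ x : Fin h → ℝ, V2.mulVec (absV (V1.mulVec x)) = W2.mulVec (absV (W1.mulVec x)) :=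
  skip_absorption_necessity_general W1 V1 W2 V2 heq
end
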